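/- If G is an undetermined three-player impartial game (o(G) = ∅), then P ∉ o(G+H) for every three-player impartial game H. -/
import Mathlib


inductive IGame : Type where
  | mk : List IGame → IGame

namespace IGame

def opts : IGame → List IGame
  | mk l => l

theorem sizeOf_lt_of_mem {g G : IGame} (h : g ∈ G.opts) : sizeOf g < sizeOf G := by
  cases G with
  | mk l =>
    have h2 : g ∈ l := h
    have := List.sizeOf_lt_of_mem h2
    simp only [mk.sizeOf_spec]
    omega

def add : IGame → IGame → IGame
  | G, H =>
    mk ((G.opts.attach.map fun g => add g.1 H) ++ (H.opts.attach.map fun h => add G h.1))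
termination_by G H => sizeOf G + sizeOf H
decreasing_by
  · have := sizeOf_lt_of_mem g.2; omega
  · have := sizeOf_lt_of_mem h.2; omega

inductive Player : Type where
  | N | O | P
  deriving DecidableEq

def out : IGame → Player → Prop
  | G, .N => ∃ g : {x // x ∈ G.opts}, out g.1 .P
  | G, .O => ∀ g : {x // x ∈ G.opts}, out g.1 .N
  | G, .P => ∀ g : {x // x ∈ G.opts}, out g.1 .O
termination_by G _ => sizeOf G
decreasing_by
  all_goals exact sizeOf_lt_of_mem g.2

theorem out_N {G : IGame} : out G .N ↔ ∃ g ∈ G.opts, out g .P := by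
  rw [out]
  exact ⟨fun ⟨g, h⟩ => ⟨g.1, g.2, h⟩, fun ⟨g, hm, h⟩ => ⟨⟨g, hm⟩, h⟩⟩

theorem out_O {G : IGame} : out G .O ↔ ∀ g ∈ G.opts, out g .N := by
  rw [out]
  exact ⟨fun h g hm => h ⟨g, hm⟩, fun h g => h g.1 g.2⟩

theorem out_P {G : IGame} : out G .P ↔ ∀ g ∈ G.opts, out g .O := by
  rw [out]
  exact ⟨fun h g hm => h ⟨g, hm⟩, fun h g => h g.1 g.2⟩

def outcome (G : IGame) : Set Player := {p | out G p}

def nim : Nat → IGame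
  | 0 => mk []
  | n+1 => mk ((nim n).opts ++ [nim n])

end IGame


namespace IGame

theorem opts_add (G H : IGame) : (add G H).opts =
    ((G.opts.attach.map fun g => add g.1 H) ++ (H.opts.attach.map fun h => add G h.1)) := by
  rw [add]
  rfl

theorem mem_opts_add {x G H : IGame} :
    x ∈ (add G H).opts ↔ (∃ g ∈ G.opts, x = add g H) ∨ (∃ h ∈ H.opts, x = add G h) := by
  simp only [opts_add, List.mem_append, List.mem_map, List.mem_attach, true_and]
  constructor
  · rintro (⟨g, hg⟩ | ⟨h, hh⟩)
    · exact Or.inl ⟨g.1, g.2, hg.symm⟩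
    · exact Or.inr ⟨h.1, h.2, hh.symm⟩
  · rintro (⟨g, hg, rfl⟩ | ⟨h, hh, rfl⟩)
    · exact Or.inl ⟨⟨g, hg⟩, rfl⟩
    · exact Or.inr ⟨⟨h, hh⟩, rfl⟩

theorem add_mem_opts_add_left {g G H : IGame} (hg : g ∈ G.opts) :
    add g H ∈ (add G H).opts :=
  mem_opts_add.mpr (Or.inl ⟨g, hg, rfl⟩)

theorem add_mem_opts_add_right {h G H : IGame} (hh : h ∈ H.opts) :
    add G h ∈ (add G H).opts :=
  mem_opts_add.mpr (Or.inr ⟨h, hh, rfl⟩)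

theorem no_NOP : ∀ (G : IGame), ¬(out G .N ∧ out G .O ∧ out G .P)
  | G => fun ⟨hN, hO, hP⟩ => by
      obtain ⟨g, hg, hgP⟩ := out_N.mp hN
      exact no_NOP g ⟨out_O.mp hO g hg, out_P.mp hP g hg, hgP⟩
termination_by G => sizeOf G
decreasing_by exact sizeOf_lt_of_mem hg

theorem key : ∀ (n : ℕ) (G H : IGame), sizeOf G + sizeOf H ≤ n →
    (out (add G H) .N → out G .N ∨ out H .N) ∧
    (out (add G H) .O → (out G .O ∨ out H .N) ∧ (out H .O ∨ out G .N)) ∧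
    (out (add G H) .P → (out G .P ∨ out H .N) ∧ (out H .P ∨ out G .N)) := by
  intro n
  induction n with
  | zero =>
    intro G H hn
    exfalso
    cases G with
    | mk l => simp only [mk.sizeOf_spec] at hn; omega
  | succ n ih =>
    intro G H hn
    have hG : ∀ g ∈ G.opts, sizeOf g + sizeOf H ≤ n := fun g hg => by
      have := sizeOf_lt_of_mem hg; omega
    have hH : ∀ h ∈ H.opts, sizeOf G + sizeOf h ≤ n := fun h hh => by
      have := sizeOf_lt_of_mem hh; omega
    refine ⟨?_, ?_, ?_⟩
    · intro h
      obtain ⟨k, hk, hkP⟩ := out_N.mp h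
      rcases mem_opts_add.mp hk with ⟨g, hg, rfl⟩ | ⟨h', hh, rfl⟩
      · rcases ((ih g H (hG g hg)).2.2 hkP).1 with hgP | hHN
        · exact Or.inl (out_N.mpr ⟨g, hg, hgP⟩)
        · exact Or.inr hHN
      · rcases ((ih G h' (hH h' hh)).2.2 hkP).2 with hhP | hGN
        · exact Or.inr (out_N.mpr ⟨h', hh, hhP⟩)
        · exact Or.inl hGN
    · intro h
      have h' := out_O.mp h
      constructor
      · by_cases hHN : out H .N
        · exact Or.inr hHN
        · refine Or.inl (out_O.mpr fun g hg => ?_)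
          rcases (ih g H (hG g hg)).1 (h' _ (add_mem_opts_add_left hg)) with hgN | hHN'
          · exact hgN
          · exact absurd hHN' hHN
      · by_cases hGN : out G .N
        · exact Or.inr hGN
        · refine Or.inl (out_O.mpr fun k hk => ?_)
          rcases (ih G k (hH k hk)).1 (h' _ (add_mem_opts_add_right hk)) with hGN' | hkN
          · exact absurd hGN' hGN
          · exact hkN
    · intro h
      have h' := out_P.mp h
      constructor
      · by_cases hHN : out H .N
        · exact Or.inr hHN
        · refine Or.inl (out_P.mpr fun g hg => ?_)
          rcases ((ih g H (hG g hg)).2.1 (h' _ (add_mem_opts_add_left hg))).1 with hgO | hHN'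
          · exact hgO
          · exact absurd hHN' hHN
      · by_cases hGN : out G .N
        · exact Or.inr hGN
        · refine Or.inl (out_P.mpr fun k hk => ?_)
          rcases ((ih G k (hH k hk)).2.1 (h' _ (add_mem_opts_add_right hk))).2 with hkO | hGN'
          · exact hkO
          · exact absurd hGN' hGN

theorem key' (G H : IGame) :
    (out (add G H) .N → out G .N ∨ out H .N) ∧
    (out (add G H) .O → (out G .O ∨ out H .N) ∧ (out H .O ∨ out G .N)) ∧
    (out (add G H) .P → (out G .P ∨ out H .N) ∧ (out H .P ∨ out G .N)) :=
  key (sizeOf G + sizeOf H) G H le_rfl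

end IGame

open IGame in
/-- If `G` is undetermined, then Previous has no winning strategy in `G+H`
for any `H`. -/
theorem undetermined_no_P_in_sum (G : IGame) (hG : IGame.outcome G = ∅)
    (H : IGame) : Player.P ∉ IGame.outcome (IGame.add G H) := by
  intro hsum
  have hout : ∀ p, ¬ out G p := by
    intro p hp
    have : p ∈ IGame.outcome G := hp
    rw [hG] at this
    exact this
  have hGN : ¬ out G .N := hout .N
  have hGO : ¬ out G .O := hout .O
  have hGP : ¬ out G .P := hout .P
  have hsum' : out (add G H) .P := hsum
  have hP' := out_P.mp hsum'
  -- from ¬O(G): a witness g1 with ¬N(g1)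
  have hg1 : ∃ g ∈ G.opts, ¬ out g .N := by
    by_contra hc
    push_neg at hc
    exact hGO (out_O.mpr hc)
  obtain ⟨g1, hg1m, hg1N⟩ := hg1
  -- from ¬P(G): a witness g2 with ¬O(g2)
  have hg2 : ∃ g ∈ G.opts, ¬ out g .O := by
    by_contra hc
    push_neg at hc
    exact hGP (out_P.mpr hc)
  obtain ⟨g2, hg2m, hg2O⟩ := hg2
  -- N(H)
  have hHN : out H .N := by
    have hO2 : out (add g2 H) .O := hP' _ (add_mem_opts_add_left hg2m)
    rcases ((key' g2 H).2.1 hO2).1 with h | h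
    · exact absurd h hg2O
    · exact h
  -- P(H)
  have hHP : out H .P := by
    refine out_P.mpr fun h hh => ?_
    have hOh : out (add G h) .O := hP' _ (add_mem_opts_add_right hh)
    rcases ((key' G h).2.1 hOh).2 with h' | h'
    · exact h'
    · exact absurd h' hGN
  -- every option of H is N
  have hallN : ∀ h ∈ H.opts, out h .N := by
    intro h hh
    have hO1 : out (add g1 H) .O := hP' _ (add_mem_opts_add_left hg1m)
    have := out_O.mp hO1 _ (add_mem_opts_add_right hh)
    rcases (key' g1 h).1 this with h' | h'
    · exact absurd h' hg1N
    · exact h'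
  obtain ⟨h', hh'm, hh'P⟩ := out_N.mp hHN
  exact no_NOP h' ⟨hallN h' hh'm, out_P.mp hHP h' hh'm, hh'P⟩
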